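/- arXiv:math/0505396 — 2 statements merged into one kernel-verified Lean document; each statement's English description precedes it below -/
import Mathlib

section
/- There exists an absolute constant C > 0 such that for every real K ≥ 1, every integer T ≥ 1, every strictly increasing sequence of positive integers (s_n), and every sequence of complex numbers (γ_n) with |γ_n| ≤ 1, one has ∑_{k ≤ K} ∑_{1 ≤ c ≤ k, gcd(c,k)=1} |∑_{n ≤ T} γ_n e_k(c s_n)|² ≤ C · (K² + s_T) · T. -/
open Finset
open scoped Classical

/-- `eexp m z = e^{2πiz/m}`. -/
noncomputable def eexp (m : ℕ) (z : ℤ) : ℂ :=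
  Complex.exp (2 * Real.pi * Complex.I * z / m)

/-!
Gallagher's argument. For a `C¹` function `f` and `p ∈ [a, b]`, comparing `‖f p‖²` with
`‖f t‖²` through the fundamental theorem of calculus and averaging over `t` gives
`‖f p‖² ≤ (b - a)⁻¹ ∫ₐᵇ ‖f‖² + ∫ₐᵇ |(‖f‖²)'|`, and `|(‖f‖²)'| ≤ t ‖f‖² + t⁻¹ ‖f'‖²`.
Take `f x = ∑ γₙ e(sₙ x)` and `p = c / k`. Distinct reduced fractions with denominators at most
`K` are `K⁻²`-spaced, so the intervals of length `δ = K⁻²` around them are disjoint and lie in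
`[-1/2, 3/2]`, where Parseval gives `∫ ‖f‖² = 2 ∑ |γₙ|²` and `∫ ‖f'‖² ≤ 2 (2π s_T)² ∑ |γₙ|²`.
With `t = 2π s_T` the sum is at most `2 (K² + 4π s_T) T`.
-/

open Complex MeasureTheory intervalIntegral
open scoped Real InnerProductSpace Interval ComplexConjugate

theorem le_inv_mul_integral_add_integral_abs_deriv {F F' : ℝ → ℝ} {a b p : ℝ}
    (hF : ∀ x, HasDerivAt F (F' x) x) (hF' : Continuous F') (hab : a < b)
    (hp : p ∈ Set.Icc a b) :
    F p ≤ (b - a)⁻¹ * (∫ x in a..b, F x) + ∫ x in a..b, |F' x| := by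
  have hFc : Continuous F := continuous_iff_continuousAt.2 fun x => (hF x).continuousAt
  have hdev : ∀ t ∈ Set.Icc a b, F p - ∫ x in a..b, |F' x| ≤ F t := by
    intro t ht
    have hftc : ∫ x in t..p, F' x = F p - F t :=
      integral_eq_sub_of_hasDerivAt (fun x _ => hF x) (hF'.intervalIntegrable _ _)
    have : ∫ x in t..p, F' x ≤ ∫ x in a..b, |F' x| := calc
      _ ≤ ‖∫ x in t..p, F' x‖ := Real.le_norm_self _
      _ ≤ ∫ x in Ι t p, ‖F' x‖ := norm_integral_le_integral_norm_uIoc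
      _ ≤ ∫ x in Set.Icc a b, ‖F' x‖ :=
        setIntegral_mono_set hF'.norm.integrableOn_Icc (ae_of_all _ fun _ => norm_nonneg _)
          (Set.uIoc_subset_uIcc.trans (Set.uIcc_subset_Icc ht hp)).eventuallyLE
      _ = ∫ x in a..b, |F' x| := by
        rw [integral_of_le hab.le, integral_Icc_eq_integral_Ioc]; rfl
    linarith
  have hint := integral_mono_on hab.le (intervalIntegrable_const (μ := volume))
    (hFc.intervalIntegrable _ _) hdev
  rw [intervalIntegral.integral_const, smul_eq_mul] at hint
  rw [← sub_le_iff_le_add, inv_mul_eq_div, le_div_iff₀ (sub_pos.2 hab)]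
  linarith

theorem two_mul_mul_le_mul_sq_add_inv_mul_sq {t : ℝ} (ht : 0 < t) (x y : ℝ) :
    2 * (x * y) ≤ t * x ^ 2 + t⁻¹ * y ^ 2 := by
  nlinarith [mul_nonneg (inv_nonneg.2 ht.le) (sq_nonneg (t * x - y)), mul_inv_cancel₀ ht.ne']

theorem sq_norm_le_of_hasDerivAt {E : Type*} [NormedAddCommGroup E] [InnerProductSpace ℝ E]
    {f f' : ℝ → E} {p δ t : ℝ} (hf : ∀ x, HasDerivAt f (f' x) x) (hf' : Continuous f')
    (hδ : 0 < δ) (ht : 0 < t) :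
    ‖f p‖ ^ 2 ≤ δ⁻¹ * (∫ x in Set.Ioo (p - δ / 2) (p + δ / 2), ‖f x‖ ^ 2) +
      ∫ x in Set.Ioo (p - δ / 2) (p + δ / 2), (t * ‖f x‖ ^ 2 + t⁻¹ * ‖f' x‖ ^ 2) := by
  have hfc : Continuous f := continuous_iff_continuousAt.2 fun x => (hf x).continuousAt
  have hlt : p - δ / 2 < p + δ / 2 := by linarith
  rw [← integral_Ioc_eq_integral_Ioo, ← integral_Ioc_eq_integral_Ioo, ← integral_of_le hlt.le,
    ← integral_of_le hlt.le, show δ⁻¹ = (p + δ / 2 - (p - δ / 2))⁻¹ by ring]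
  refine (le_inv_mul_integral_add_integral_abs_deriv (fun x => (hf x).norm_sq)
    (by fun_prop) hlt ⟨by linarith, by linarith⟩).trans ?_
  gcongr
  refine integral_mono_on hlt.le (Continuous.intervalIntegrable (by fun_prop) _ _)
    (Continuous.intervalIntegrable (by fun_prop) _ _) fun x _ => ?_
  calc |2 * ⟪f x, f' x⟫_ℝ| ≤ 2 * (‖f x‖ * ‖f' x‖) := by
        rw [abs_mul, abs_two]; gcongr; exact abs_real_inner_le_norm _ _
    _ ≤ t * ‖f x‖ ^ 2 + t⁻¹ * ‖f' x‖ ^ 2 := two_mul_mul_le_mul_sq_add_inv_mul_sq ht _ _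

noncomputable def trigPoly {ι : Type*} (S : Finset ι) (a : ι → ℂ) (ν : ι → ℤ) (x : ℝ) : ℂ :=
  ∑ i ∈ S, a i * exp (2 * π * I * ν i * x)

section TrigPoly

variable {ι : Type*} (S : Finset ι) (a : ι → ℂ) (ν : ι → ℤ)

theorem hasDerivAt_trigPoly (x : ℝ) :
    HasDerivAt (trigPoly S a ν) (trigPoly S (fun i => 2 * π * I * ν i * a i) ν x) x := by
  unfold trigPoly
  refine HasDerivAt.fun_sum fun i _ => ?_
  exact (((hasDerivAt_id (x : ℂ)).const_mul (2 * π * I * ν i)).cexp.comp_ofReal).const_mul (a i)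
    |>.congr_deriv (by simp only [id, mul_one]; ring)

theorem continuous_trigPoly : Continuous (trigPoly S a ν) := by
  unfold trigPoly; fun_prop

theorem integral_exp_two_pi_I_int_mul (d : ℤ) (u : ℝ) (N : ℕ) :
    ∫ x in u..u + N, exp (2 * π * I * d * x) = if d = 0 then (N : ℂ) else 0 := by
  split_ifs with hd
  · simp [hd]
  have hc : 2 * π * I * d ≠ 0 := by simp [Real.pi_ne_zero, I_ne_zero, hd]
  have hperiod : exp (2 * π * I * d * ↑(u + N)) = exp (2 * π * I * d * u) := by
    rw [show 2 * π * I * d * ↑(u + N) = 2 * π * I * d * u + (d * N : ℤ) * (2 * π * I) by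
      push_cast; ring, exp_add, exp_int_mul_two_pi_mul_I, mul_one]
  rw [integral_exp_mul_complex hc, hperiod, sub_self, zero_div]

theorem integral_sq_norm_trigPoly (hν : Set.InjOn ν S) (u : ℝ) (N : ℕ) :
    ∫ x in u..u + N, ‖trigPoly S a ν x‖ ^ 2 = N * ∑ i ∈ S, ‖a i‖ ^ 2 := by
  have hexpand : ∀ x : ℝ, ((‖trigPoly S a ν x‖ ^ 2 : ℝ) : ℂ) =
      ∑ i ∈ S, ∑ j ∈ S, a i * conj (a j) * exp (2 * π * I * (ν i - ν j : ℤ) * x) := by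
    intro x
    rw [ofReal_pow, ← mul_conj', trigPoly, map_sum, sum_mul_sum]
    refine sum_congr rfl fun i _ => sum_congr rfl fun j _ => ?_
    rw [map_mul, ← exp_conj, mul_mul_mul_comm, ← exp_add]
    congr 2
    simp only [map_mul, conj_ofReal, conj_I, map_intCast, map_ofNat]
    push_cast; ring
  have hint : ∀ i j, IntervalIntegrable
      (fun x : ℝ => a i * conj (a j) * exp (2 * π * I * (ν i - ν j : ℤ) * x)) volume u (u + N) :=
    fun i j => Continuous.intervalIntegrable (by fun_prop) _ _
  apply Complex.ofReal_injective
  rw [← intervalIntegral.integral_ofReal]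
  simp only [hexpand]
  rw [intervalIntegral.integral_finsetSum (f := fun i x => ∑ j ∈ S,
      a i * conj (a j) * exp (2 * π * I * (ν i - ν j : ℤ) * x))
    fun i _ => Continuous.intervalIntegrable (by fun_prop) _ _]
  rw [ofReal_mul, ofReal_natCast, ofReal_sum, mul_sum]
  refine sum_congr rfl fun i hi => ?_
  rw [intervalIntegral.integral_finsetSum fun j _ => hint i j]
  simp only [intervalIntegral.integral_const_mul, integral_exp_two_pi_I_int_mul, sub_eq_zero]
  rw [sum_eq_single_of_mem i hi fun j hj hji => by
    rw [if_neg fun h => hji (hν hi hj h).symm, mul_zero], if_pos rfl, mul_conj', ofReal_pow]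
  ring

end TrigPoly

theorem sum_setIntegral_Ioo_le_setIntegral {κ : Type*} {F : ℝ → ℝ} {s : Set ℝ} {P : Finset κ}
    {x : κ → ℝ} {δ : ℝ} (hsep : (P : Set κ).Pairwise fun i j => δ ≤ |x i - x j|)
    (hsub : ∀ i ∈ P, Set.Ioo (x i - δ / 2) (x i + δ / 2) ⊆ s) (hs : MeasurableSet s)
    (hF : IntegrableOn F s) (hF0 : ∀ y ∈ s, 0 ≤ F y) :
    ∑ i ∈ P, ∫ y in Set.Ioo (x i - δ / 2) (x i + δ / 2), F y ≤ ∫ y in s, F y := by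
  have hdisj : (P : Set κ).Pairwise
      (Function.onFun Disjoint fun i => Set.Ioo (x i - δ / 2) (x i + δ / 2)) := by
    refine hsep.mono' fun i j hij => Set.disjoint_left.2 ?_
    rintro y ⟨hyi₁, hyi₂⟩ ⟨hyj₁, hyj₂⟩
    exact (hij.trans_lt (abs_sub_lt_iff.2 ⟨by linarith, by linarith⟩)).false
  rw [← integral_biUnion_finset P (fun _ _ => measurableSet_Ioo) hdisj
    fun i hi => hF.mono_set (hsub i hi)]
  exact setIntegral_mono_set hF (ae_restrict_of_forall_mem hs hF0)
    (Set.iUnion₂_subset hsub).eventuallyLE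

theorem sum_sq_norm_two_pi_I_mul_le {ι : Type*} (S : Finset ι) (a : ι → ℂ) {ν : ι → ℤ} {B : ℝ}
    (hνB : ∀ i ∈ S, |(ν i : ℝ)| ≤ B) :
    ∑ i ∈ S, ‖2 * π * I * ν i * a i‖ ^ 2 ≤ (2 * π * B) ^ 2 * ∑ i ∈ S, ‖a i‖ ^ 2 := by
  rw [mul_sum]
  refine sum_le_sum fun i hi => ?_
  have hnorm : ‖2 * π * I * ν i * a i‖ = 2 * π * |(ν i : ℝ)| * ‖a i‖ := by
    simp [Real.pi_pos.le, ← Int.cast_abs]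
  rw [hnorm, ← mul_pow]
  gcongr
  exact hνB i hi

theorem sum_sq_norm_trigPoly_le {ι κ : Type*} {S : Finset ι} {a : ι → ℂ} {ν : ι → ℤ}
    (hν : Set.InjOn ν S) {B : ℝ} (hB : 0 < B) (hνB : ∀ i ∈ S, |(ν i : ℝ)| ≤ B)
    {P : Finset κ} {x : κ → ℝ} {δ : ℝ} (hδ : 0 < δ)
    (hsep : (P : Set κ).Pairwise fun j k => δ ≤ |x j - x k|) {u : ℝ} {N : ℕ}
    (hsub : ∀ j ∈ P, Set.Ioo (x j - δ / 2) (x j + δ / 2) ⊆ Set.Icc u (u + N)) :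
    ∑ j ∈ P, ‖trigPoly S a ν (x j)‖ ^ 2 ≤ N * (δ⁻¹ + 4 * π * B) * ∑ i ∈ S, ‖a i‖ ^ 2 := by
  set f := trigPoly S a ν
  set a' := fun i => 2 * π * I * ν i * a i
  set f' := trigPoly S a' ν
  set t := 2 * π * B
  have ht : 0 < t := by positivity
  set G := fun y => t * ‖f y‖ ^ 2 + t⁻¹ * ‖f' y‖ ^ 2
  have hfc : Continuous f := continuous_trigPoly S a ν
  have hf'c : Continuous f' := continuous_trigPoly S a' ν
  have hpoint : ∀ j ∈ P, ‖f (x j)‖ ^ 2 ≤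
      δ⁻¹ * (∫ y in Set.Ioo (x j - δ / 2) (x j + δ / 2), ‖f y‖ ^ 2) +
        ∫ y in Set.Ioo (x j - δ / 2) (x j + δ / 2), G y :=
    fun j _ => sq_norm_le_of_hasDerivAt (hasDerivAt_trigPoly S a ν) hf'c hδ ht
  have hIcc : ∀ F : ℝ → ℝ, ∫ y in Set.Icc u (u + N), F y = ∫ y in u..u + N, F y := fun F => by
    rw [integral_of_le (le_add_of_nonneg_right N.cast_nonneg), integral_Icc_eq_integral_Ioc]
  have hsum : ∀ F : ℝ → ℝ, Continuous F → (∀ y, 0 ≤ F y) →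
      ∑ j ∈ P, ∫ y in Set.Ioo (x j - δ / 2) (x j + δ / 2), F y ≤ ∫ y in u..u + N, F y :=
    fun F hF hF0 => hIcc F ▸ sum_setIntegral_Ioo_le_setIntegral hsep hsub measurableSet_Icc
      hF.integrableOn_Icc fun y _ => hF0 y
  have hparseval : ∫ y in u..u + N, ‖f y‖ ^ 2 = N * ∑ i ∈ S, ‖a i‖ ^ 2 :=
    integral_sq_norm_trigPoly S a ν hν u N
  have hparseval' : ∫ y in u..u + N, ‖f' y‖ ^ 2 = N * ∑ i ∈ S, ‖a' i‖ ^ 2 :=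
    integral_sq_norm_trigPoly S a' ν hν u N
  have hG : ∫ y in u..u + N, G y =
      t * (N * ∑ i ∈ S, ‖a i‖ ^ 2) + t⁻¹ * (N * ∑ i ∈ S, ‖a' i‖ ^ 2) := by
    rw [integral_add (Continuous.intervalIntegrable (by fun_prop) _ _)
      (Continuous.intervalIntegrable (by fun_prop) _ _), intervalIntegral.integral_const_mul,
      intervalIntegral.integral_const_mul, hparseval, hparseval']
  have hcoeff := sum_sq_norm_two_pi_I_mul_le S a hνB
  calc ∑ j ∈ P, ‖f (x j)‖ ^ 2
      ≤ ∑ j ∈ P, (δ⁻¹ * (∫ y in Set.Ioo (x j - δ / 2) (x j + δ / 2), ‖f y‖ ^ 2) +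
          ∫ y in Set.Ioo (x j - δ / 2) (x j + δ / 2), G y) := sum_le_sum hpoint
    _ = δ⁻¹ * ∑ j ∈ P, (∫ y in Set.Ioo (x j - δ / 2) (x j + δ / 2), ‖f y‖ ^ 2) +
          ∑ j ∈ P, ∫ y in Set.Ioo (x j - δ / 2) (x j + δ / 2), G y := by
      rw [sum_add_distrib, mul_sum]
    _ ≤ δ⁻¹ * (∫ y in u..u + N, ‖f y‖ ^ 2) + ∫ y in u..u + N, G y := by
      gcongr
      · exact hsum _ (by fun_prop) fun y => by positivity
      · exact hsum _ (by fun_prop) fun y => by positivity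
    _ ≤ N * (δ⁻¹ + 4 * π * B) * ∑ i ∈ S, ‖a i‖ ^ 2 := by
      rw [hparseval, hG]
      have : t⁻¹ * (N * ∑ i ∈ S, ‖a' i‖ ^ 2) ≤ t * (N * ∑ i ∈ S, ‖a i‖ ^ 2) := by
        calc _ ≤ t⁻¹ * (N * (t ^ 2 * ∑ i ∈ S, ‖a i‖ ^ 2)) := by gcongr
          _ = _ := by field_simp
      linarith

theorem inv_mul_le_abs_div_sub_div {a b c d : ℤ} (hb : 0 < b) (hd : 0 < d)
    (hab : Nat.Coprime a.natAbs b.natAbs) (hcd : Nat.Coprime c.natAbs d.natAbs)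
    (hne : (a, b) ≠ (c, d)) :
    ((b : ℝ) * d)⁻¹ ≤ |(a : ℝ) / b - c / d| := by
  have hb' : (0 : ℝ) < b := by exact_mod_cast hb
  have hd' : (0 : ℝ) < d := by exact_mod_cast hd
  have hcross : a * d - b * c ≠ 0 := fun h => hne <| Prod.ext_iff.2 <|
    Rat.div_int_inj hb hd hab hcd <| by
      rw [div_eq_div_iff (by positivity) (by positivity)]
      exact_mod_cast (sub_eq_zero.1 h).trans (mul_comm b c)
  have hone : (1 : ℝ) ≤ |((a * d - b * c : ℤ) : ℝ)| := by
    exact_mod_cast Int.one_le_abs hcross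
  rw [div_sub_div _ _ hb'.ne' hd'.ne', abs_div, abs_of_pos (mul_pos hb' hd'), inv_eq_one_div]
  push_cast at hone
  gcongr

theorem eexp_mul (k c : ℕ) (z : ℤ) :
    eexp k (c * z) = exp (2 * π * I * z * ((c / k : ℝ) : ℂ)) := by
  rw [eexp]
  push_cast
  ring_nf

/-- The reduced fractions `c / k ∈ (0, 1]` with `k ≤ Q`, as pairs `⟨k, c⟩`. -/
def fareyPoints (Q : ℕ) : Finset (Σ _ : ℕ, ℕ) :=
  (Icc 1 Q).sigma fun k => (Icc 1 k).filter fun c => Nat.gcd c k = 1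

theorem mem_fareyPoints {Q k c : ℕ} :
    ⟨k, c⟩ ∈ fareyPoints Q ↔ 1 ≤ c ∧ c ≤ k ∧ Nat.Coprime c k ∧ k ≤ Q := by
  simp only [fareyPoints, mem_sigma, mem_filter, mem_Icc]
  constructor
  · rintro ⟨⟨-, hkQ⟩, ⟨hc, hck⟩, hcop⟩
    exact ⟨hc, hck, hcop, hkQ⟩
  · rintro ⟨hc, hck, hcop, hkQ⟩
    exact ⟨⟨hc.trans hck, hkQ⟩, ⟨hc, hck⟩, hcop⟩

theorem div_mem_Ioc_of_mem_fareyPoints {Q k c : ℕ} (h : ⟨k, c⟩ ∈ fareyPoints Q) :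
    (c : ℝ) / k ∈ Set.Ioc 0 1 := by
  obtain ⟨hc, hck, -, -⟩ := mem_fareyPoints.1 h
  exact ⟨div_pos (by exact_mod_cast hc) (by exact_mod_cast hc.trans hck),
    div_le_one_of_le₀ (by exact_mod_cast hck) (Nat.cast_nonneg _)⟩

theorem fareyPoints_pairwise_sep (Q : ℕ) :
    (fareyPoints Q : Set (Σ _ : ℕ, ℕ)).Pairwise fun q r =>
      ((Q : ℝ) ^ 2)⁻¹ ≤ |(q.2 : ℝ) / q.1 - r.2 / r.1| := by
  rintro ⟨k, c⟩ hq ⟨k', c'⟩ hr hne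
  obtain ⟨hc, hck, hcop, hkQ⟩ := mem_fareyPoints.1 hq
  obtain ⟨hc', hck', hcop', hk'Q⟩ := mem_fareyPoints.1 hr
  have hpair : ((c : ℤ), (k : ℤ)) ≠ ((c' : ℤ), (k' : ℤ)) := by
    simp only [ne_eq, Prod.mk.injEq, Nat.cast_inj, Sigma.mk.injEq, heq_eq_eq] at hne ⊢
    tauto
  have hspacing := inv_mul_le_abs_div_sub_div (a := c) (b := k) (c := c') (d := k')
    (by omega) (by omega) (by simpa using hcop) (by simpa using hcop') hpair
  push_cast at hspacing
  refine le_trans (inv_anti₀ ?_ ?_) hspacing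
  · exact_mod_cast Nat.mul_pos (by omega) (by omega)
  · rw [sq]
    gcongr

theorem Ioo_subset_Icc_of_mem_fareyPoints {Q : ℕ} {q : Σ _ : ℕ, ℕ} (hq : q ∈ fareyPoints Q)
    {δ : ℝ} (hδ : δ ≤ 1) :
    Set.Ioo ((q.2 : ℝ) / q.1 - δ / 2) (q.2 / q.1 + δ / 2) ⊆ Set.Icc (-1 / 2) (3 / 2) := by
  obtain ⟨hx₀, hx₁⟩ := div_mem_Ioc_of_mem_fareyPoints hq
  rintro y ⟨hy₁, hy₂⟩
  constructor <;> linarith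

theorem sum_fareyPoints_sq_norm_trigPoly_le {ι : Type*} {S : Finset ι} {a : ι → ℂ} {ν : ι → ℤ}
    (hν : Set.InjOn ν S) {B : ℝ} (hB : 0 < B) (hνB : ∀ i ∈ S, |(ν i : ℝ)| ≤ B)
    {K : ℝ} (hK : 1 ≤ K) :
    ∑ q ∈ fareyPoints ⌊K⌋₊, ‖trigPoly S a ν ((q.2 : ℝ) / q.1)‖ ^ 2 ≤
      2 * (K ^ 2 + 4 * π * B) * ∑ i ∈ S, ‖a i‖ ^ 2 := by
  have hQ : (0 : ℝ) < ⌊K⌋₊ := by exact_mod_cast Nat.floor_pos.2 hK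
  have hδQ : (K ^ 2)⁻¹ ≤ ((⌊K⌋₊ : ℝ) ^ 2)⁻¹ :=
    inv_anti₀ (by positivity) (by gcongr; exact Nat.floor_le (by linarith))
  have hδ : (K ^ 2)⁻¹ ≤ 1 := inv_le_one_of_one_le₀ (one_le_pow₀ hK)
  have hsieve := sum_sq_norm_trigPoly_le (a := a) hν hB hνB (inv_pos.2 (by positivity))
    ((fareyPoints_pairwise_sep _).mono' fun _ _ => hδQ.trans) (u := -1 / 2) (N := 2)
    fun q hq => (Ioo_subset_Icc_of_mem_fareyPoints hq hδ).trans
      (Set.Icc_subset_Icc le_rfl (by norm_num))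
  rwa [inv_inv, Nat.cast_ofNat] at hsieve

theorem stmt5 :
    ∃ C : ℝ, 0 < C ∧
      ∀ (K : ℝ) (T : ℕ) (s : ℕ → ℕ) (γ : ℕ → ℂ),
        1 ≤ K → 1 ≤ T → StrictMono s → (∀ n, 0 < s n) →
        (∀ n, ‖γ n‖ ≤ 1) →
        ∑ k ∈ Finset.Icc 1 ⌊K⌋₊,
          ∑ c ∈ (Finset.Icc 1 k).filter (fun c => Nat.gcd c k = 1),
            ‖∑ n ∈ Finset.Icc 1 T, γ n * eexp k (c * s n)‖ ^ 2
          ≤ C * ((K ^ 2 + (s T : ℝ)) * T) := by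
  refine ⟨8 * π, by positivity, fun K T s γ hK _ hs hspos hγ => ?_⟩
  have hinj : Set.InjOn (fun n => (s n : ℤ)) (Icc 1 T) :=
    fun n _ m _ h => hs.injective (Int.natCast_inj.1 h)
  have hfreq : ∀ n ∈ Icc 1 T, |((s n : ℤ) : ℝ)| ≤ s T := fun n hn => by
    rw [Int.cast_natCast, abs_of_nonneg (Nat.cast_nonneg _)]
    exact_mod_cast hs.monotone (mem_Icc.1 hn).2
  have hsieve := sum_fareyPoints_sq_norm_trigPoly_le (a := γ) hinj
    (by exact_mod_cast hspos T) hfreq hK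
  rw [fareyPoints, sum_sigma] at hsieve
  simp only [trigPoly] at hsieve
  simp only [eexp_mul]
  have hγT : ∑ n ∈ Icc 1 T, ‖γ n‖ ^ 2 ≤ T :=
    (sum_le_card_nsmul _ _ 1 fun n _ => pow_le_one₀ (norm_nonneg _) (hγ n)).trans (by simp)
  have hπ : 0 ≤ (8 * π - 2) * (K ^ 2 * T) :=
    mul_nonneg (by linarith [Real.pi_gt_three]) (by positivity)
  calc _ ≤ 2 * (K ^ 2 + 4 * π * s T) * ∑ n ∈ Icc 1 T, ‖γ n‖ ^ 2 := hsieve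
    _ ≤ 2 * (K ^ 2 + 4 * π * s T) * T := by gcongr
    _ ≤ 8 * π * ((K ^ 2 + s T) * T) := by linarith
end

section
/- Let λ ≥ 2 be an integer. There exists a constant C > 0 depending only on λ such that for every real Δ ≥ 2, the number of primes p with p ∤ λ whose multiplicative order t_p of λ modulo p satisfies t_p ≤ Δ is at most C · Δ² / log Δ. -/
/-! Every prime `p ∤ λ` with `t_p ≤ D` divides `N = ∏_{t=1}^{D} (λ^t - 1) ≤ λ^(D²)`.
At most `D` prime factors of `N` are `≤ D`, and if `k` of them exceed `D` then
`(D + 1)^k ≤ N`, so `k ≤ D² log λ / log (D + 1)`. With `D = ⌊Δ⌋` and `Δ ≤ Δ² / log Δ` this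
gives the bound with `C = 1 + log λ`. -/

open Finset

namespace Nat

lemma pow_card_filter_lt_primeFactors_le (n m : ℕ) (hn : n ≠ 0) :
    (m + 1) ^ #{p ∈ n.primeFactors | m < p} ≤ n :=
  calc (m + 1) ^ #{p ∈ n.primeFactors | m < p}
      ≤ ∏ p ∈ n.primeFactors with m < p, p :=
        pow_card_le_prod _ _ _ fun _ hp ↦ (mem_filter.1 hp).2
    _ ≤ ∏ p ∈ n.primeFactors, p := prod_le_prod_of_subset_of_one_le' (filter_subset _ _)
        fun _ hp _ ↦ (prime_of_mem_primeFactors hp).one_le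
    _ ≤ n := le_of_dvd (pos_of_ne_zero hn) (prod_primeFactors_dvd n)

lemma card_filter_le_primeFactors_le (n m : ℕ) : #{p ∈ n.primeFactors | p ≤ m} ≤ m :=
  calc #{p ∈ n.primeFactors | p ≤ m} ≤ #(Icc 1 m) := card_le_card fun p hp ↦ by
        obtain ⟨hp, hpm⟩ := mem_filter.1 hp
        exact mem_Icc.2 ⟨(prime_of_mem_primeFactors hp).one_le, hpm⟩
    _ = m := by simp

lemma card_primeFactors_le_add_log_div_log (n m : ℕ) (hn : n ≠ 0) (hm : 1 ≤ m) :
    (#n.primeFactors : ℝ) ≤ m + Real.log n / Real.log (m + 1) := by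
  have hlog : 0 < Real.log (m + 1) := Real.log_pos (by norm_cast; omega)
  have hlarge : (#{p ∈ n.primeFactors | m < p} : ℝ) ≤ Real.log n / Real.log (m + 1) := by
    rw [le_div_iff₀ hlog, ← Real.log_pow]
    exact Real.log_le_log (by positivity)
      (by exact_mod_cast pow_card_filter_lt_primeFactors_le n m hn)
  have hsplit :
      #{p ∈ n.primeFactors | p ≤ m} + #{p ∈ n.primeFactors | m < p} = #n.primeFactors := by
    simpa only [not_le] using card_filter_add_card_filter_not (s := n.primeFactors) (· ≤ m)
  rw [← hsplit, cast_add]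
  have hsmall : (#{p ∈ n.primeFactors | p ≤ m} : ℝ) ≤ m := by
    exact_mod_cast card_filter_le_primeFactors_le n m
  linarith

lemma dvd_pow_orderOf_sub_one (a n : ℕ) : n ∣ a ^ orderOf (a : ZMod n) - 1 := by
  rcases eq_zero_or_pos (a ^ orderOf (a : ZMod n)) with h | h
  · simp [h]
  · rw [← modEq_iff_dvd' h, ← ZMod.natCast_eq_natCast_iff]
    simp [pow_orderOf_eq_one]

end Nat

def prodPowSubOne (lam D : ℕ) : ℕ := ∏ t ∈ Icc 1 D, (lam ^ t - 1)

lemma prodPowSubOne_ne_zero {lam : ℕ} (hlam : 2 ≤ lam) (D : ℕ) : prodPowSubOne lam D ≠ 0 :=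
  prod_ne_zero_iff.2 fun _ ht ↦
    Nat.sub_ne_zero_of_lt (Nat.one_lt_pow (Nat.pos_iff_ne_zero.1 (mem_Icc.1 ht).1) hlam)

lemma prodPowSubOne_le_pow {lam : ℕ} (hlam : 0 < lam) (D : ℕ) :
    prodPowSubOne lam D ≤ lam ^ (D ^ 2) :=
  calc prodPowSubOne lam D ≤ (lam ^ D) ^ #(Icc 1 D) := prod_le_pow_card _ _ _ fun _ ht ↦
        (Nat.sub_le _ _).trans (Nat.pow_le_pow_right hlam (mem_Icc.1 ht).2)
    _ = lam ^ (D ^ 2) := by simp [← pow_mul, sq]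

lemma mem_primeFactors_prodPowSubOne {lam D p : ℕ} (hlam : 2 ≤ lam) (hp : p.Prime)
    (hpl : ¬ p ∣ lam) (hord : orderOf (lam : ZMod p) ≤ D) :
    p ∈ (prodPowSubOne lam D).primeFactors := by
  have := Fact.mk hp
  have hne : (lam : ZMod p) ≠ 0 := by rwa [Ne, ZMod.natCast_eq_zero_iff]
  have hpos : 0 < orderOf (lam : ZMod p) :=
    Nat.pos_of_dvd_of_pos (ZMod.orderOf_dvd_card_sub_one hne) (by have := hp.two_le; omega)
  refine Nat.mem_primeFactors.2 ⟨hp, ?_, prodPowSubOne_ne_zero hlam D⟩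
  exact (Nat.dvd_pow_orderOf_sub_one lam p).trans (dvd_prod_of_mem _ (mem_Icc.2 ⟨hpos, hord⟩))

lemma log_prodPowSubOne_le {lam : ℕ} (hlam : 2 ≤ lam) (D : ℕ) :
    Real.log (prodPowSubOne lam D) ≤ (D : ℝ) ^ 2 * Real.log lam := by
  have hpos : (0 : ℝ) < prodPowSubOne lam D :=
    Nat.cast_pos.2 (Nat.pos_of_ne_zero (prodPowSubOne_ne_zero hlam D))
  have hle : (prodPowSubOne lam D : ℝ) ≤ (lam : ℝ) ^ (D ^ 2) := by
    exact_mod_cast prodPowSubOne_le_pow (by omega) D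
  simpa [Real.log_pow] using Real.log_le_log hpos hle

theorem stmt7 (lam : ℕ) (hlam : 2 ≤ lam) :
    ∃ C : ℝ, 0 < C ∧
      ∀ Δ : ℝ, 2 ≤ Δ →
        ({p : ℕ | p.Prime ∧ ¬ p ∣ lam ∧
            (orderOf (lam : ZMod p) : ℝ) ≤ Δ}.ncard : ℝ)
          ≤ C * Δ ^ 2 / Real.log Δ := by
  have hloglam : 0 ≤ Real.log lam := Real.log_nonneg (by norm_cast; omega)
  refine ⟨1 + Real.log lam, by positivity, fun Δ hΔ ↦ ?_⟩
  set D := ⌊Δ⌋₊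
  set N := prodPowSubOne lam D
  have hD : 1 ≤ D := Nat.le_floor (by push_cast; linarith)
  have hlogΔ : 0 < Real.log Δ := Real.log_pos (by linarith)
  have hsub :
      {p : ℕ | p.Prime ∧ ¬ p ∣ lam ∧ (orderOf (lam : ZMod p) : ℝ) ≤ Δ} ⊆ N.primeFactors :=
    fun p ⟨hp, hpl, hord⟩ ↦ mem_primeFactors_prodPowSubOne hlam hp hpl (Nat.le_floor hord)
  have hlogN : Real.log N ≤ Δ ^ 2 * Real.log lam := by
    refine (log_prodPowSubOne_le hlam D).trans ?_
    gcongr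
    exact Nat.floor_le (by linarith)
  have hΔ_le : Δ ≤ Δ ^ 2 / Real.log Δ := by
    rw [le_div_iff₀ hlogΔ]
    nlinarith [Real.log_le_sub_one_of_pos (by linarith : 0 < Δ)]
  calc ({p : ℕ | p.Prime ∧ ¬ p ∣ lam ∧ (orderOf (lam : ZMod p) : ℝ) ≤ Δ}.ncard : ℝ)
      ≤ #N.primeFactors := by
        exact_mod_cast (Set.ncard_le_ncard hsub N.primeFactors.finite_toSet).trans_eq
          (Set.ncard_coe_finset _)
    _ ≤ D + Real.log N / Real.log (D + 1) :=
        Nat.card_primeFactors_le_add_log_div_log N D (prodPowSubOne_ne_zero hlam D) hD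
    _ ≤ Δ ^ 2 / Real.log Δ + Δ ^ 2 * Real.log lam / Real.log Δ := by
        gcongr
        · exact (Nat.floor_le (by linarith)).trans hΔ_le
        · exact (Nat.lt_floor_add_one Δ).le
    _ = (1 + Real.log lam) * Δ ^ 2 / Real.log Δ := by ring
end
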